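/- arXiv:2401.09892 — 3 statements merged into one kernel-verified Lean document; each statement's English description precedes it below -/
import Mathlib

section
/- Let F : A → B be a k-linear functor between k-linear categories with B additive and idempotent-split. If the precomposition functor F* : [B^op, Vec_k] → [A^op, Vec_k] is faithful, then F is liberal: every object Y of B is a direct summand of a finite direct sum F(X₁) ⊕ ⋯ ⊕ F(Xₙ) for some objects Xᵢ of A. -/
open CategoryTheory CategoryTheory.Limits

universe u v

/-!
Let `I(Z, Y) ⊆ (Z ⟶ Y)` be the span of the morphisms factoring through some `F.obj X`; it is
stable under precomposition, so `Z ↦ (Z ⟶ Y) ⧸ I(Z, Y)` is a quotient of the representable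
presheaf of `Y`. The restriction of the quotient map along `F` vanishes, since every
`F.obj X ⟶ Y` lies in `I`; faithfulness of `F*` forces the quotient map itself to vanish, so
`𝟙 Y ∈ I(Y, Y)`, i.e. `𝟙 Y = ∑ cᵢ • gᵢ ≫ hᵢ` with `gᵢ : Y ⟶ F.obj Xᵢ`; the `cᵢ • gᵢ` and the
`hᵢ` assemble into a section and a retraction through `⨁ F.obj Xᵢ`.
-/

namespace CategoryTheory.Functor

variable (k : Type u) [Ring k] {A : Type*} {B : Type*} [Category A] [Category.{v} B]
  [Preadditive B] [CategoryTheory.Linear k B] (F : A ⥤ B)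

def spanFactorThrough (Z Y : B) : Submodule k (Z ⟶ Y) :=
  Submodule.span k {f | ∃ (X : A) (g : Z ⟶ F.obj X) (h : F.obj X ⟶ Y), g ≫ h = f}

variable {k F}

lemma mem_spanFactorThrough_of_source {X : A} {Y : B} (f : F.obj X ⟶ Y) :
    f ∈ F.spanFactorThrough k (F.obj X) Y :=
  Submodule.subset_span ⟨X, 𝟙 _, f, Category.id_comp f⟩

lemma spanFactorThrough_le_comap_leftComp {Z Z' : B} (Y : B) (w : Z' ⟶ Z) :
    F.spanFactorThrough k Z Y ≤
      (F.spanFactorThrough k Z' Y).comap (CategoryTheory.Linear.leftComp k Y w) := by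
  rw [spanFactorThrough, Submodule.span_le]
  rintro f ⟨X, g, h, rfl⟩
  exact Submodule.subset_span ⟨X, w ≫ g, h, Category.assoc _ _ _⟩

lemma exists_biproduct_retract_of_id_mem_spanFactorThrough [HasFiniteBiproducts B] {Y : B}
    (hY : 𝟙 Y ∈ F.spanFactorThrough k Y Y) :
    ∃ (n : ℕ) (X : Fin n → A)
      (s : Y ⟶ ⨁ fun i => F.obj (X i)) (r : (⨁ fun i => F.obj (X i)) ⟶ Y), s ≫ r = 𝟙 Y := by
  obtain ⟨n, c, f, hf⟩ := (Submodule.mem_span_set' ..).mp hY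
  choose X g h hgh using fun i => (f i).2
  refine ⟨n, X, biproduct.lift fun i => c i • g i, biproduct.desc h, ?_⟩
  simp only [biproduct.lift_desc, CategoryTheory.Linear.smul_comp, hgh, hf]

variable (k F)

def quotientSpanFactorThrough (Y : B) : Bᵒᵖ ⥤ ModuleCat.{v} k where
  obj Z := ModuleCat.of k ((Z.unop ⟶ Y) ⧸ F.spanFactorThrough k Z.unop Y)
  map w := ModuleCat.ofHom <| Submodule.mapQ _ _ (CategoryTheory.Linear.leftComp k Y w.unop)
    (spanFactorThrough_le_comap_leftComp Y w.unop)
  map_id Z := by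
    ext f
    exact congrArg Submodule.Quotient.mk (Category.id_comp f)
  map_comp w w' := by
    ext f
    exact congrArg Submodule.Quotient.mk (Category.assoc _ _ f)

def toQuotientSpanFactorThrough (Y : B) :
    (linearYoneda k B).obj Y ⟶ F.quotientSpanFactorThrough k Y where
  app Z := ModuleCat.ofHom (F.spanFactorThrough k Z.unop Y).mkQ

lemma whiskerLeft_toQuotientSpanFactorThrough (Y : B) :
    whiskerLeft F.op (F.toQuotientSpanFactorThrough k Y) = 0 := by
  ext X f
  exact (Submodule.Quotient.mk_eq_zero _).mpr (mem_spanFactorThrough_of_source f)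

lemma id_mem_spanFactorThrough_of_toQuotient_eq_zero {Y : B}
    (hY : F.toQuotientSpanFactorThrough k Y = 0) : 𝟙 Y ∈ F.spanFactorThrough k Y Y :=
  (Submodule.Quotient.mk_eq_zero _).mp
    (congrArg (fun α => (α.app (Opposite.op Y)).hom (𝟙 Y)) hY)

end CategoryTheory.Functor

theorem liberal_of_restriction_faithful_general (k : Type u) [Field k]
    {A B : Type v} [SmallCategory A] [SmallCategory B]
    [Preadditive B]
    [CategoryTheory.Linear k B]
    [HasFiniteBiproducts B]
    (F : A ⥤ B)
    (hfaithful : ((Functor.whiskeringLeft Aᵒᵖ Bᵒᵖ (ModuleCat.{v} k)).obj F.op).Faithful) :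
    ∀ Y : B, ∃ (n : ℕ) (X : Fin n → A)
      (s : Y ⟶ ⨁ fun i => F.obj (X i)) (r : (⨁ fun i => F.obj (X i)) ⟶ Y),
        s ≫ r = 𝟙 Y := by
  intro Y
  have hzero : F.toQuotientSpanFactorThrough k Y = 0 :=
    hfaithful.map_injective <| by
      rw [Functor.map_zero]
      exact F.whiskerLeft_toQuotientSpanFactorThrough k Y
  exact Functor.exists_biproduct_retract_of_id_mem_spanFactorThrough
    (F.id_mem_spanFactorThrough_of_toQuotient_eq_zero k hzero)

/-- Let `F : A ⥤ B` be a `k`-linear functor between `k`-linear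
categories with `B` additive and idempotent-split. If the precomposition
functor `F^* : [Bᵒᵖ, Vec_k] ⥤ [Aᵒᵖ, Vec_k]` is faithful, then `F` is liberal:
every object `Y` of `B` is a direct summand of a finite direct sum
`F(X₁) ⊕ ⋯ ⊕ F(Xₙ)` for some objects `Xᵢ` of `A`. -/
theorem liberal_of_restriction_faithful (k : Type u) [Field k]
    {A B : Type v} [SmallCategory A] [SmallCategory B]
    [Preadditive A] [Preadditive B]
    [CategoryTheory.Linear k A] [CategoryTheory.Linear k B]
    [HasFiniteBiproducts B] [IsIdempotentComplete B]
    (F : A ⥤ B) [F.Additive] [F.Linear k]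
    (hfaithful : ((Functor.whiskeringLeft Aᵒᵖ Bᵒᵖ (ModuleCat.{v} k)).obj F.op).Faithful) :
    ∀ Y : B, ∃ (n : ℕ) (X : Fin n → A)
      (s : Y ⟶ ⨁ fun i => F.obj (X i)) (r : (⨁ fun i => F.obj (X i)) ⟶ Y),
        s ≫ r = 𝟙 Y :=
  liberal_of_restriction_faithful_general k F hfaithful
end

section
/- Let C be a finite tensor category (a k-linear finite abelian rigid monoidal category with End(𝟙) ≅ k, bilinear exact tensor product). For any nonzero projective object P of C, the coevaluation morphism η : 𝟙 → P* ⊗ P is a monomorphism, and consequently the functors P ⊗ - and - ⊗ P are faithful endofunctors of C. -/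
/-!
The zigzag identities show that a coevaluation `η_ X Y` vanishes only if `X` and `Y` do, and a
nonzero morphism out of the simple unit is mono. In a rigid category `P ⊗ -` is left adjoint to
`ᘁP ⊗ -`, with unit `(λ_ Z).inv ≫ η ▷ Z ≫ α`; since every `- ⊗ Z` is a right adjoint it preserves
monomorphisms, so the unit is mono and the left adjoint `P ⊗ -` is faithful. The right dual
handles `- ⊗ P` in the same way.
-/

open CategoryTheory CategoryTheory.Limits MonoidalCategory

namespace CategoryTheory

variable {C : Type*} [Category C] [MonoidalCategory C]

section Preadditive

variable [Preadditive C] [MonoidalPreadditive C]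

theorem coevaluation_ne_zero_of_not_isZero_right (X Y : C) [ExactPairing X Y] (hY : ¬ IsZero Y) :
    η_ X Y ≠ 0 := by
  intro hη
  refine hY ((IsZero.iff_id_eq_zero Y).2 ?_)
  have zigzag := ExactPairing.coevaluation_evaluation X Y
  rw [hη, MonoidalPreadditive.whiskerLeft_zero, zero_comp] at zigzag
  simpa using congrArg (fun t => (ρ_ Y).inv ≫ t ≫ (λ_ Y).hom) zigzag.symm

theorem coevaluation_ne_zero_of_not_isZero_left (X Y : C) [ExactPairing X Y] (hX : ¬ IsZero X) :
    η_ X Y ≠ 0 := by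
  intro hη
  refine hX ((IsZero.iff_id_eq_zero X).2 ?_)
  have zigzag := ExactPairing.evaluation_coevaluation X Y
  rw [hη, MonoidalPreadditive.zero_whiskerRight, zero_comp] at zigzag
  simpa using congrArg (fun t => (λ_ X).inv ≫ t ≫ (ρ_ X).hom) zigzag.symm

end Preadditive

theorem tensorLeftAdjunction_unit_app (Y Y' Z : C) [ExactPairing Y Y'] :
    (tensorLeftAdjunction Y Y').unit.app Z = (λ_ Z).inv ≫ η_ Y Y' ▷ Z ≫ (α_ Y Y' Z).hom := by
  rw [← Adjunction.homEquiv_id]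
  simp [tensorLeftAdjunction, tensorLeftHomEquiv]

theorem tensorRightAdjunction_unit_app (Y Y' Z : C) [ExactPairing Y Y'] :
    (tensorRightAdjunction Y Y').unit.app Z = (ρ_ Z).inv ≫ Z ◁ η_ Y Y' ≫ (α_ Z Y Y').inv := by
  rw [← Adjunction.homEquiv_id]
  simp [tensorRightAdjunction, tensorRightHomEquiv]

theorem preservesMonomorphisms_tensorRight_of_hasLeftDual (X : C) [HasLeftDual X] :
    (tensorRight X).PreservesMonomorphisms :=
  Functor.preservesMonomorphisms_of_adjunction (tensorRightAdjunction (ᘁX) X)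

theorem preservesMonomorphisms_tensorLeft_of_hasRightDual (X : C) [HasRightDual X] :
    (tensorLeft X).PreservesMonomorphisms :=
  Functor.preservesMonomorphisms_of_adjunction (tensorLeftAdjunction X (Xᘁ))

theorem faithful_tensorLeft_of_mono_coevaluation [LeftRigidCategory C] (X : C)
    [Mono (η_ (ᘁX) X)] : (tensorLeft X).Faithful := by
  have (Z : C) : Mono ((tensorLeftAdjunction (ᘁX) X).unit.app Z) := by
    have : Mono (η_ (ᘁX) X ▷ Z) :=
      (preservesMonomorphisms_tensorRight_of_hasLeftDual Z).preserves (η_ (ᘁX) X)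
    rw [tensorLeftAdjunction_unit_app]
    infer_instance
  exact (tensorLeftAdjunction (ᘁX) X).faithful_L_of_mono_unit_app

theorem faithful_tensorRight_of_mono_coevaluation [RightRigidCategory C] (X : C)
    [Mono (η_ X (Xᘁ))] : (tensorRight X).Faithful := by
  have (Z : C) : Mono ((tensorRightAdjunction X (Xᘁ)).unit.app Z) := by
    have : Mono (Z ◁ η_ X (Xᘁ)) :=
      (preservesMonomorphisms_tensorLeft_of_hasRightDual Z).preserves (η_ X (Xᘁ))
    rw [tensorRightAdjunction_unit_app]
    infer_instance
  exact (tensorRightAdjunction X (Xᘁ)).faithful_L_of_mono_unit_app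

end CategoryTheory

/-- Let `C` be a finite tensor category over a field `k`
(a `k`-linear abelian rigid monoidal category with exact tensor product and
simple unit).  For any nonzero projective object `P` of `C`, the coevaluation
`η : 𝟙 ⟶ P* ⊗ P` (where `P* = ᘁP` is the right dual of `P` in the EGNO
convention) is a monomorphism, and consequently the functors `P ⊗ -` and
`- ⊗ P` are faithful endofunctors of `C`. -/
theorem coevaluation_mono_and_tensor_faithful
    (k : Type*) [Field k] {C : Type*} [Category C] [Abelian C]
    [CategoryTheory.Linear k C] [MonoidalCategory C] [MonoidalPreadditive C]
    [MonoidalLinear k C] [RigidCategory C] [Simple (𝟙_ C)]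
    [∀ X : C, PreservesFiniteLimits (tensorLeft X)]
    [∀ X : C, PreservesFiniteColimits (tensorLeft X)]
    [∀ X : C, PreservesFiniteLimits (tensorRight X)]
    [∀ X : C, PreservesFiniteColimits (tensorRight X)]
    (P : C) [Projective P] (hP : ¬ IsZero P) :
    Mono (η_ (ᘁP) P) ∧ (tensorLeft P).Faithful ∧ (tensorRight P).Faithful := by
  have : Mono (η_ (ᘁP) P) :=
    mono_of_nonzero_from_simple (coevaluation_ne_zero_of_not_isZero_right _ _ hP)
  have : Mono (η_ P (Pᘁ)) :=
    mono_of_nonzero_from_simple (coevaluation_ne_zero_of_not_isZero_left _ _ hP)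
  exact ⟨inferInstance, faithful_tensorLeft_of_mono_coevaluation P,
    faithful_tensorRight_of_mono_coevaluation P⟩
end

section
/- A finite tensor category is self-injective: an object is projective if and only if it is injective. In particular, for any projective object P, the objects P* (the dual) and P ⊗ P* ⊗ P are injective, and P, being a direct summand of P ⊗ P* ⊗ P, is injective. -/
/-!
In a rigid monoidal category, taking right adjoint mates `f ↦ fᘁ` is a bijection
`(X ⟶ Y) ≃ (Yᘁ ⟶ Xᘁ)` (inverse `g ↦ ᘁg`) reversing composition, so it exchanges monomorphisms
and epimorphisms. Reading `Hom(-, ᘁP) ≃ Hom(P, (-)ᘁ)` through it, `ᘁP` is injective when `P` is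
projective, and dually `ᘁI` is projective when `I` is injective. Tensoring with an object is both
a left and a right adjoint, so it preserves projectives and injectives. Finally the zig-zag
identity makes `P` a retract of `P ⊗ ᘁP ⊗ P`.
-/

open CategoryTheory CategoryTheory.Limits MonoidalCategory

namespace CategoryTheory

variable {C : Type*} [Category C] [MonoidalCategory C]

-- Both sides have the same image under the injective map `g ↦ Yᘁ ◁ g ≫ ε_ Y Yᘁ`.
theorem leftAdjointMate_rightAdjointMate {X Y : C} [HasRightDual X] [HasRightDual Y]
    (f : X ⟶ Y) : (ᘁ(fᘁ)) = f := by
  have h := congrArg (tensorLeftHomEquiv X Y (Yᘁ) (𝟙_ C))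
    ((leftAdjointMate_comp_evaluation (fᘁ)).trans (rightAdjointMate_comp_evaluation f))
  exact (cancel_mono _).1 <|
    (tensorLeftHomEquiv_whiskerLeft_comp_evaluation (Z := Yᘁ) _).symm.trans <|
      h.trans (tensorLeftHomEquiv_whiskerLeft_comp_evaluation (Z := Yᘁ) f)

theorem rightAdjointMate_leftAdjointMate {X Y : C} [HasLeftDual X] [HasLeftDual Y]
    (f : X ⟶ Y) : (ᘁf)ᘁ = f := by
  have h := congrArg (tensorRightHomEquiv X (ᘁY) Y (𝟙_ C))
    ((rightAdjointMate_comp_evaluation (ᘁf)).trans (leftAdjointMate_comp_evaluation f))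
  exact (cancel_mono _).1 <|
    (tensorRightHomEquiv_whiskerRight_comp_evaluation (X := ᘁY) _).symm.trans <|
      h.trans (tensorRightHomEquiv_whiskerRight_comp_evaluation (X := ᘁY) f)

theorem rightAdjointMate_injective {X Y : C} [HasRightDual X] [HasRightDual Y] :
    Function.Injective (fun f : X ⟶ Y => fᘁ) :=
  Function.LeftInverse.injective leftAdjointMate_rightAdjointMate

section LeftRigid

variable [LeftRigidCategory C]

-- Every `Z` is the right dual `(ᘁZ)ᘁ`, so every morphism out of `Xᘁ` is a mate.
theorem epi_rightAdjointMate {X Y : C} [HasRightDual X] [HasRightDual Y] (f : X ⟶ Y) [Mono f] :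
    Epi (fᘁ) where
  left_cancellation {Z} u v h := by
    rw [← rightAdjointMate_leftAdjointMate u, ← rightAdjointMate_leftAdjointMate v] at h ⊢
    rw [← comp_rightAdjointMate, ← comp_rightAdjointMate] at h
    rw [(cancel_mono f).1 (rightAdjointMate_injective h)]

theorem mono_rightAdjointMate {X Y : C} [HasRightDual X] [HasRightDual Y] (f : X ⟶ Y) [Epi f] :
    Mono (fᘁ) where
  right_cancellation {Z} u v h := by
    rw [← rightAdjointMate_leftAdjointMate u, ← rightAdjointMate_leftAdjointMate v] at h ⊢
    rw [← comp_rightAdjointMate, ← comp_rightAdjointMate] at h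
    rw [(cancel_epi f).1 (rightAdjointMate_injective h)]

instance tensorLeft_isLeftAdjoint (X : C) : (tensorLeft X).IsLeftAdjoint :=
  (tensorLeftAdjunction (ᘁX) X).isLeftAdjoint

instance tensorRight_isRightAdjoint (X : C) : (tensorRight X).IsRightAdjoint :=
  (tensorRightAdjunction (ᘁX) X).isRightAdjoint

theorem injective_tensor_right (I X : C) [Injective I] : Injective (I ⊗ X) :=
  (tensorRightAdjunction (ᘁX) X).map_injective I ‹_›

theorem projective_tensor_left (X P : C) [Projective P] : Projective (X ⊗ P) :=
  (tensorLeftAdjunction (ᘁX) X).map_projective P ‹_›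

end LeftRigid

section RightRigid

variable [RightRigidCategory C]

instance tensorLeft_isRightAdjoint (X : C) : (tensorLeft X).IsRightAdjoint :=
  (tensorLeftAdjunction X (Xᘁ)).isRightAdjoint

instance tensorRight_isLeftAdjoint (X : C) : (tensorRight X).IsLeftAdjoint :=
  (tensorRightAdjunction X (Xᘁ)).isLeftAdjoint

theorem injective_tensor_left (X I : C) [Injective I] : Injective (X ⊗ I) :=
  (tensorLeftAdjunction X (Xᘁ)).map_injective I ‹_›

theorem projective_tensor_right (P X : C) [Projective P] : Projective (P ⊗ X) :=
  (tensorRightAdjunction X (Xᘁ)).map_projective P ‹_›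

end RightRigid

section Rigid

variable [RigidCategory C]

theorem injective_leftDual (P : C) [Projective P] : Injective (ᘁP) where
  factors {X Y} g f _ := by
    have := epi_rightAdjointMate f
    obtain ⟨k, hk⟩ := Projective.factors (gᘁ : P ⟶ Xᘁ) (fᘁ)
    refine ⟨ᘁk, rightAdjointMate_injective ?_⟩
    dsimp only
    rw [comp_rightAdjointMate, rightAdjointMate_leftAdjointMate, hk]

theorem projective_leftDual (I : C) [Injective I] : Projective (ᘁI) where
  factors {E X} g e _ := by
    have := mono_rightAdjointMate e
    obtain ⟨k, hk⟩ := Injective.factors (gᘁ : Xᘁ ⟶ I) (eᘁ)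
    refine ⟨ᘁk, rightAdjointMate_injective ?_⟩
    dsimp only
    rw [comp_rightAdjointMate, rightAdjointMate_leftAdjointMate, hk]

end Rigid

def retractTensorLeftDualTensor (P : C) [HasLeftDual P] : Retract P (P ⊗ (ᘁP) ⊗ P) where
  i := (ρ_ P).inv ≫ P ◁ η_ (ᘁP) P
  r := (α_ P (ᘁP) P).inv ≫ ε_ (ᘁP) P ▷ P ≫ (λ_ P).hom
  retract := by simp

end CategoryTheory

/-- A finite tensor category is self-injective: an object is
projective if and only if it is injective.  (For a projective `P`, the dual
`ᘁP` and `P ⊗ ᘁP ⊗ P` are injective, and `P`, being a direct summand of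
`P ⊗ ᘁP ⊗ P` by the zig-zag identities, is injective; dually every injective
is projective.) -/
theorem finite_tensor_self_injective
    (k : Type*) [Field k] {C : Type*} [Category C] [Abelian C]
    [CategoryTheory.Linear k C] [MonoidalCategory C] [MonoidalPreadditive C]
    [MonoidalLinear k C] [RigidCategory C] [Simple (𝟙_ C)]
    [∀ X : C, PreservesFiniteLimits (tensorLeft X)]
    [∀ X : C, PreservesFiniteColimits (tensorLeft X)]
    [∀ X : C, PreservesFiniteLimits (tensorRight X)]
    [∀ X : C, PreservesFiniteColimits (tensorRight X)] :
    ∀ P : C, Projective P ↔ Injective P := by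
  intro P
  constructor
  · intro _
    have : Injective (ᘁP) := injective_leftDual P
    have : Injective ((ᘁP) ⊗ P) := injective_tensor_right _ _
    have : Injective (P ⊗ (ᘁP) ⊗ P) := injective_tensor_left _ _
    exact (retractTensorLeftDualTensor P).injective
  · intro _
    have : Projective (ᘁP) := projective_leftDual P
    have : Projective ((ᘁP) ⊗ P) := projective_tensor_right _ _
    have : Projective (P ⊗ (ᘁP) ⊗ P) := projective_tensor_left _ _
    exact (retractTensorLeftDualTensor P).projective
end
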